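/- arXiv:2410.11032 — 4 statements merged into one kernel-verified Lean document; each statement's English description precedes it below -/
import Mathlib

section
/- Let A and B be skew-symmetric bilinear forms on a finite-dimensional vector space V over an algebraically closed field of characteristic zero, with B nondegenerate. Then there exists a basis of V in which the matrices of A and B are simultaneously block-diagonal, with each pair of corresponding blocks being a Jordan block pair: A_i has the form with eigenvalue λ_i in the upper-right block (λ_i on the diagonal, 1 on the superdiagonal) and its negative transpose in the lower-left, while B_i is the standard symplectic block with identity in the upper-right and minus identity in the lower-left. -/
open Matrix

/-- The `m × m` Jordan-type upper block: `λ` on the diagonal, `1` on the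
superdiagonal. -/
def jordanUpper {K : Type*} [Field K] (lam : K) (m : ℕ) :
    Matrix (Fin m) (Fin m) K :=
  fun i j => if (i : ℕ) = (j : ℕ) then lam else if (i : ℕ) + 1 = (j : ℕ) then 1 else 0

/-- The `2m × 2m` Jordan block of the pencil with eigenvalue `λ`:
`[[0, J(λ)], [-J(λ)ᵀ, 0]]`. -/
def jordanBlockA {K : Type*} [Field K] (lam : K) (m : ℕ) :
    Matrix (Fin m ⊕ Fin m) (Fin m ⊕ Fin m) K :=
  Matrix.fromBlocks 0 (jordanUpper lam m) (-(jordanUpper lam m)ᵀ) 0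

/-- The standard symplectic `2m × 2m` block `[[0, I], [-I, 0]]`. -/
def jordanBlockB {K : Type*} [Field K] (m : ℕ) :
    Matrix (Fin m ⊕ Fin m) (Fin m ⊕ Fin m) K :=
  Matrix.fromBlocks 0 (1 : Matrix (Fin m) (Fin m) K) (-1) 0

/-!
Let `R` be the endomorphism with `A u v = B (R u) v`; it is `B`-self-adjoint. Pick an eigenvalue
`c` of `R`, put `N = R - c`, and let `m` be the nilpotency index of `N` on its generalized kernel
`U = ker Nⁿ`. Since `U` is `B`-orthogonal to the Fitting complement `range Nⁿ`, there are
`x, y ∈ U` with `B x (N^(m-1) y) ≠ 0`, and replacing `y` by `q(N) y` for a suitable `q` gives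
`B x (N^k y) = δ_{k, m-1}`. The vectors `N^i x` and `N^(m-1-j) y` then span an `N`-invariant
subspace `W` on which `(A, B)` has matrices `(jordanBlockA c m, jordanBlockB m)`. As `B` is
nondegenerate on `W`, `V = W ⊕ W^⊥`; the complement is `R`-invariant, hence `A`-orthogonal to `W`,
and induction on the dimension finishes the proof.
-/

section

open Module LinearMap

variable {K V : Type*} [Field K] [AddCommGroup V] [Module K V]

theorem LinearMap.IsSelfAdjoint.pow {R M M₂ : Type*} [CommSemiring R] [AddCommMonoid M]
    [Module R M] [AddCommMonoid M₂] [Module R M₂] {B : M →ₗ[R] M →ₗ[R] M₂} {f : Module.End R M}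
    (hf : B.IsSelfAdjoint f) (k : ℕ) : B.IsSelfAdjoint ⇑(f ^ k) := by
  induction k with
  | zero => rw [pow_zero]; exact isAdjointPair_one
  | succ k ih =>
    have := IsAdjointPair.mul ih hf
    rwa [← pow_succ, ← pow_succ'] at this

theorem LinearMap.IsSelfAdjoint.apply_apply_self_eq_zero [NeZero (2 : K)]
    {B : LinearMap.BilinForm K V} {f : V → V} (hB : ∀ u v, B u v = -B v u)
    (hf : B.IsSelfAdjoint f) (u : V) : B u (f u) = 0 := by
  have h : B u (f u) = -B u (f u) := (hB u (f u)).trans (by rw [hf u u])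
  have h2 : (2 : K) * B u (f u) = 0 := by linear_combination h
  exact (mul_eq_zero.mp h2).resolve_left two_ne_zero

theorem LinearMap.IsSelfAdjoint.exists_pow_eq_zero_apply_pow_ne_zero [FiniteDimensional K V]
    {B : LinearMap.BilinForm K V} {N : Module.End K V} (hB : B.Nondegenerate)
    (hN : B.IsSelfAdjoint N) (hker : ker N ≠ ⊥) :
    ∃ m, 0 < m ∧ ∃ x y, (N ^ m) x = 0 ∧ (N ^ m) y = 0 ∧ B x ((N ^ (m - 1)) y) ≠ 0 := by
  classical
  obtain ⟨n, hfit, hn⟩ :=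
    ((eventually_isCompl_ker_pow_range_pow N).and (Filter.eventually_gt_atTop 0)).exists
  obtain ⟨m, hmU, hm_min⟩ : ∃ m, ker (N ^ n) ≤ ker (N ^ m) ∧ ∀ j < m, ¬ker (N ^ n) ≤ ker (N ^ j) :=
    have hU : ∃ j, ker (N ^ n) ≤ ker (N ^ j) := ⟨n, le_rfl⟩
    ⟨Nat.find hU, Nat.find_spec hU, fun _ => Nat.find_min hU⟩
  have hm : 0 < m := by
    obtain ⟨x₀, hx₀, hx₀0⟩ := Submodule.exists_mem_ne_zero_of_ne_bot hker
    refine Nat.pos_of_ne_zero fun h0 => hx₀0 ?_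
    have hx₀U : x₀ ∈ ker (N ^ n) := Module.End.pow_map_zero_of_le hn (by simpa using hx₀)
    simpa [h0] using hmU hx₀U
  obtain ⟨x, hxU, hx⟩ : ∃ x ∈ ker (N ^ n), (N ^ (m - 1)) x ≠ 0 := by
    simpa [SetLike.not_le_iff_exists] using hm_min _ (Nat.sub_one_lt hm.ne')
  obtain ⟨v, hv⟩ : ∃ v, B ((N ^ (m - 1)) x) v ≠ 0 := by
    by_contra! h
    exact hx (hB.1 _ h)
  -- the Fitting component of `v` in `range (N ^ n)` pairs trivially with `ker (N ^ n)`
  obtain ⟨u, hu, w, ⟨z, rfl⟩, rfl⟩ :=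
    Submodule.mem_sup.mp (hfit.sup_eq_top ▸ Submodule.mem_top (x := v))
  have hz : B ((N ^ (m - 1)) x) ((N ^ n) z) = 0 := by
    rw [← hN.pow n, ← Module.End.mul_apply, ← pow_add, add_comm, pow_add, Module.End.mul_apply,
      mem_ker.mp hxU, map_zero, map_zero, zero_apply]
  refine ⟨m, hm, x, u, hmU hxU, hmU hu, ?_⟩
  rw [← hN.pow]
  simpa [hz] using hv

theorem Module.End.exists_pow_eq_zero_and_dual_pow_eq_ite (N : Module.End K V)
    (φ : Module.Dual K V) {m : ℕ} {y : V} (hy : (N ^ m) y = 0)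
    (hφ : φ ((N ^ (m - 1)) y) ≠ 0) :
    ∃ y', (N ^ m) y' = 0 ∧ ∀ k, φ ((N ^ k) y') = if k = m - 1 then 1 else 0 := by
  have hm : m ≠ 0 := by rintro rfl; simp_all
  set c : ℕ → K := fun i => φ ((N ^ i) y) with hc
  have hc_high : ∀ i, m ≤ i → c i = 0 := fun i hi => by
    simp [hc, Module.End.pow_map_zero_of_le hi hy]
  -- `y'` is `q(N) y`, for `q` the inverse of the reversed generating series of the `c i`
  set d : PowerSeries K := PowerSeries.mk fun i => c (m - 1 - i)
  have hqd : d⁻¹ * d = 1 := PowerSeries.inv_mul_cancel d (by simpa [d] using hφ)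
  refine ⟨∑ i ∈ Finset.range m, PowerSeries.coeff i d⁻¹ • (N ^ i) y, ?_, fun k => ?_⟩
  · refine (map_sum _ _ _).trans (Finset.sum_eq_zero fun i _ => ?_)
    rw [map_smul, ← Module.End.mul_apply, ← pow_add,
      Module.End.pow_map_zero_of_le (Nat.le_add_right m i) hy, smul_zero]
  have hk : φ ((N ^ k) (∑ i ∈ Finset.range m, PowerSeries.coeff i d⁻¹ • (N ^ i) y))
      = ∑ i ∈ Finset.range m, PowerSeries.coeff i d⁻¹ * c (k + i) := by
    simp [map_sum, hc, ← Module.End.mul_apply, ← pow_add]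
  rw [hk]
  rcases lt_or_ge k m with hkm | hkm
  · calc ∑ i ∈ Finset.range m, PowerSeries.coeff i d⁻¹ * c (k + i)
        = ∑ i ∈ Finset.range (m - 1 - k + 1), PowerSeries.coeff i d⁻¹ * c (k + i) := by
          refine (Finset.sum_subset (Finset.range_subset_range.mpr (by omega))
            fun i hi hi' => ?_).symm
          simp only [Finset.mem_range, not_lt] at hi hi'
          rw [hc_high _ (by omega), mul_zero]
      _ = PowerSeries.coeff (m - 1 - k) (d⁻¹ * d) := by
          rw [PowerSeries.coeff_mul, Finset.Nat.sum_antidiagonal_eq_sum_range_succ_mk]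
          refine Finset.sum_congr rfl fun i hi => ?_
          rw [Finset.mem_range] at hi
          simp only [d, PowerSeries.coeff_mk]
          congr 2
          omega
      _ = if k = m - 1 then 1 else 0 := by
          rw [hqd, PowerSeries.coeff_one]
          exact if_congr (by omega) rfl rfl
  · rw [if_neg (by omega)]
    exact Finset.sum_eq_zero fun i _ => by rw [hc_high _ (by omega), mul_zero]

variable (N : Module.End K V) in
/-- The second half runs backwards, so that `B` pairs the two halves through the identity matrix
once `B x (N ^ k y) = if k = m - 1 then 1 else 0`. -/
def jordanChain (x y : V) (m : ℕ) : Fin m ⊕ Fin m → V :=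
  Sum.elim (fun i => (N ^ (i : ℕ)) x) fun j => (N ^ (m - 1 - j)) y

section JordanChain

variable {B : LinearMap.BilinForm K V} {N : Module.End K V} {x y : V} {m : ℕ}

theorem LinearMap.IsSelfAdjoint.apply_pow_pow_self_eq_zero [NeZero (2 : K)]
    (hN : B.IsSelfAdjoint N) (hB : ∀ u v, B u v = -B v u) (u : V) (a b : ℕ) :
    B ((N ^ a) u) ((N ^ b) u) = 0 := by
  rw [hN.pow, ← Module.End.mul_apply, ← pow_add]
  exact (hN.pow _).apply_apply_self_eq_zero hB u

theorem LinearMap.IsSelfAdjoint.apply_pow_pow_eq_ite (hN : B.IsSelfAdjoint N)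
    (hxy : ∀ k, B x ((N ^ k) y) = if k = m - 1 then 1 else 0) (a b : ℕ) :
    B ((N ^ a) x) ((N ^ b) y) = if a + b = m - 1 then 1 else 0 := by
  rw [hN.pow, ← Module.End.mul_apply, ← pow_add, hxy]

theorem apply_jordanChain_jordanChain [NeZero (2 : K)] (hB : ∀ u v, B u v = -B v u)
    (hN : B.IsSelfAdjoint N) (hxy : ∀ k, B x ((N ^ k) y) = if k = m - 1 then 1 else 0)
    (p q : Fin m ⊕ Fin m) :
    B (jordanChain N x y m p) (jordanChain N x y m q) = jordanBlockB m p q := by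
  have hxy' (i j : Fin m) :
      B ((N ^ (i : ℕ)) x) ((N ^ (m - 1 - j)) y) = (1 : Matrix _ _ K) i j := by
    rw [hN.apply_pow_pow_eq_ite hxy, one_apply]
    exact if_congr (by omega) rfl rfl
  rcases p with i | i <;> rcases q with j | j
  · simp [jordanChain, jordanBlockB, hN.apply_pow_pow_self_eq_zero hB]
  · simp [jordanChain, jordanBlockB, hxy']
  · rw [hB]
    simp [jordanChain, jordanBlockB, hxy', one_apply, eq_comm]
  · simp [jordanChain, jordanBlockB, hN.apply_pow_pow_self_eq_zero hB]

theorem apply_add_smul_jordanChain_jordanChain [NeZero (2 : K)] (hB : ∀ u v, B u v = -B v u)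
    (hN : B.IsSelfAdjoint N) (hxy : ∀ k, B x ((N ^ k) y) = if k = m - 1 then 1 else 0)
    (c : K) (p q : Fin m ⊕ Fin m) :
    B ((N + c • 1) (jordanChain N x y m p)) (jordanChain N x y m q) = jordanBlockA c m p q := by
  have hR (u v : V) : B ((N + c • 1) u) v = B (N u) v + c * B u v := by simp
  have hN' (k : ℕ) (u : V) : N ((N ^ k) u) = (N ^ (k + 1)) u := by
    rw [← Module.End.mul_apply, ← pow_succ']
  have hxy' (i j : Fin m) :
      B ((N + c • 1) ((N ^ (i : ℕ)) x)) ((N ^ (m - 1 - j)) y) = jordanUpper c m i j := by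
    rw [hR, hN', hN.apply_pow_pow_eq_ite hxy, hN.apply_pow_pow_eq_ite hxy, jordanUpper]
    split_ifs <;> first | omega | simp
  rcases p with i | i <;> rcases q with j | j
  · simp [hN', jordanChain, jordanBlockA, hN.apply_pow_pow_self_eq_zero hB]
  · simpa [jordanChain, jordanBlockA] using hxy' i j
  · have hRsa : B.IsSelfAdjoint ⇑(N + c • 1) := IsAdjointPair.add hN (isAdjointPair_one.smul c)
    rw [hRsa, hB]
    simp only [jordanChain, Sum.elim_inl, Sum.elim_inr]
    rw [hxy']
    simp [jordanBlockA]
  · simp [hN', jordanChain, jordanBlockA, hN.apply_pow_pow_self_eq_zero hB]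

theorem apply_jordanChain_mem_span (hx : (N ^ m) x = 0) (hy : (N ^ m) y = 0)
    (p : Fin m ⊕ Fin m) :
    N (jordanChain N x y m p) ∈ Submodule.span K (Set.range (jordanChain N x y m)) := by
  have hN' (k : ℕ) (u : V) : N ((N ^ k) u) = (N ^ (k + 1)) u := by
    rw [← Module.End.mul_apply, ← pow_succ']
  rcases p with ⟨i, hi⟩ | ⟨j, hj⟩
  · obtain hi' | hi' := (by omega : i + 1 < m ∨ i + 1 = m)
    · exact Submodule.subset_span ⟨Sum.inl ⟨i + 1, hi'⟩, by simp [jordanChain, hN']⟩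
    · simp [jordanChain, hN', hi', hx]
  · cases j with
    | zero => simp [jordanChain, hN', Nat.sub_add_cancel (by omega : 1 ≤ m), hy]
    | succ j =>
      refine Submodule.subset_span ⟨Sum.inr ⟨j, by omega⟩, ?_⟩
      simp only [jordanChain, Sum.elim_inr, hN']
      congr 2
      omega

end JordanChain

theorem exists_jordanChain [IsAlgClosed K] [FiniteDimensional K V] [Nontrivial V]
    [NeZero (2 : K)]
    {B : LinearMap.BilinForm K V} {R : Module.End K V} (hB : ∀ u v, B u v = -B v u)
    (hBnd : B.Nondegenerate) (hR : B.IsSelfAdjoint R) :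
    ∃ m, 0 < m ∧ ∃ (c : K) (g : Fin m ⊕ Fin m → V), (∀ p q, B (g p) (g q) = jordanBlockB m p q) ∧
      (∀ p q, B (R (g p)) (g q) = jordanBlockA c m p q) ∧
      ∀ p, R (g p) ∈ Submodule.span K (Set.range g) := by
  obtain ⟨c, hc⟩ := R.exists_eigenvalue
  have hN : B.IsSelfAdjoint ⇑(R - c • 1) := IsAdjointPair.sub hR (isAdjointPair_one.smul c)
  have hker : ker (R - c • 1) ≠ ⊥ := by
    rwa [← Module.End.eigenspace_def, ← Module.End.hasEigenvalue_iff]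
  obtain ⟨m, hm, x, y, hx, hy, hxy⟩ := hN.exists_pow_eq_zero_apply_pow_ne_zero hBnd hker
  obtain ⟨y', hy', hxy'⟩ := (R - c • 1).exists_pow_eq_zero_and_dual_pow_eq_ite (B x) hy hxy
  refine ⟨m, hm, c, jordanChain (R - c • 1) x y' m, apply_jordanChain_jordanChain hB hN hxy',
    fun p q => ?_, fun p => ?_⟩
  · simpa using apply_add_smul_jordanChain_jordanChain hB hN hxy' c p q
  · rw [show ∀ v, R v = (R - c • 1) v + c • v by simp]
    exact add_mem (apply_jordanChain_mem_span hx hy' p)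
      (Submodule.smul_mem _ c (Submodule.subset_span ⟨p, rfl⟩))

theorem linearIndependent_of_isUnit_gram {ι : Type*} [Fintype ι] [DecidableEq ι]
    (B : LinearMap.BilinForm K V) {g : ι → V} (hg : IsUnit (Matrix.of fun i j => B (g i) (g j))) :
    LinearIndependent K g := by
  rw [Fintype.linearIndependent_iff]
  intro t ht
  have h0 :
      t ᵥ* Matrix.of (fun i j => B (g i) (g j)) = 0 ᵥ* Matrix.of fun i j => B (g i) (g j) := by
    ext j
    simpa [vecMul, dotProduct] using congrArg (B · (g j)) ht
  exact congrFun (vecMul_injective_iff_isUnit.mpr hg h0)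

theorem jordanBlockB_mul_self (m : ℕ) : jordanBlockB (K := K) m * jordanBlockB m = -1 := by
  simp [jordanBlockB, fromBlocks_multiply, ← fromBlocks_one, fromBlocks_neg]

theorem isUnit_jordanBlockB (m : ℕ) : IsUnit (jordanBlockB (K := K) m) :=
  IsUnit.of_mul_eq_one (-jordanBlockB m) (by rw [mul_neg, jordanBlockB_mul_self, neg_neg])

end

section

open Module LinearMap.BilinForm

variable {K V : Type*} [Field K] [AddCommGroup V] [Module K V]

variable (K V) in
def HasJordanKroneckerBasis (A B : LinearMap.BilinForm K V) : Prop :=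
  ∃ (k : ℕ) (sz : Fin k → ℕ) (_ : ∀ i, 0 < sz i) (eig : Fin k → K)
    (b : Basis ((i : Fin k) × (Fin (sz i) ⊕ Fin (sz i))) K V),
    toMatrix b A = blockDiagonal' (fun i => jordanBlockA (eig i) (sz i)) ∧
      toMatrix b B = blockDiagonal' fun i => jordanBlockB (sz i)

def Equiv.sumSigmaFinSucc {k : ℕ} (α : Fin (k + 1) → Type*) :
    α 0 ⊕ (Σ i : Fin k, α i.succ) ≃ Σ i, α i where
  toFun := Sum.elim (Sigma.mk 0) fun p => ⟨p.1.succ, p.2⟩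
  invFun p := Fin.cases (motive := fun i => α i → α 0 ⊕ Σ i : Fin k, α i.succ)
    Sum.inl (fun i a => Sum.inr ⟨i, a⟩) p.1 p.2
  left_inv := by rintro (a | ⟨i, a⟩) <;> rfl
  right_inv := by rintro ⟨i, a⟩; cases i using Fin.cases <;> rfl

theorem Matrix.blockDiagonal'_eq_reindex_fromBlocks {R : Type*} [Zero R] {k : ℕ}
    {α : Fin (k + 1) → Type*} (M : ∀ i, Matrix (α i) (α i) R) :
    blockDiagonal' M = reindex (Equiv.sumSigmaFinSucc α) (Equiv.sumSigmaFinSucc α)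
      (fromBlocks (M 0) 0 0 (blockDiagonal' fun i => M i.succ)) := by
  ext ⟨i, a⟩ ⟨j, b⟩
  cases i using Fin.cases <;> cases j using Fin.cases <;>
    simp [Equiv.sumSigmaFinSucc, blockDiagonal'_apply, Fin.succ_ne_zero, (Fin.succ_ne_zero _).symm]

theorem LinearMap.BilinForm.toMatrix_map_prodEquivOfIsCompl {ι ι' : Type*} [Fintype ι]
    [DecidableEq ι] [Fintype ι'] [DecidableEq ι'] (F : LinearMap.BilinForm K V)
    {W W' : Submodule K V} (h : IsCompl W W') (hF : ∀ w ∈ W, ∀ w' ∈ W', F w w' = 0 ∧ F w' w = 0)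
    (b : Basis ι K W) (b' : Basis ι' K W') :
    toMatrix ((b.prod b').map (W.prodEquivOfIsCompl W' h)) F =
      fromBlocks (toMatrix b (F.restrict W)) 0 0 (toMatrix b' (F.restrict W')) := by
  ext (i | i) (j | j) <;>
    simp [toMatrix_apply, hF _ (b _).2 _ (b' _).2]

theorem LinearMap.BilinForm.toMatrix_reindex {ι ι' : Type*} [Fintype ι] [DecidableEq ι]
    [Fintype ι'] [DecidableEq ι'] (F : LinearMap.BilinForm K V) (b : Basis ι K V) (e : ι ≃ ι') :
    toMatrix (b.reindex e) F = reindex e e (toMatrix b F) := by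
  ext
  simp [toMatrix_apply]

theorem LinearMap.BilinForm.toMatrix_reindex_sumSigmaFinSucc {k : ℕ} {α : Fin (k + 1) → Type*}
    [∀ i, Fintype (α i)] [∀ i, DecidableEq (α i)] (F : LinearMap.BilinForm K V)
    {W W' : Submodule K V} (h : IsCompl W W') (hF : ∀ w ∈ W, ∀ w' ∈ W', F w w' = 0 ∧ F w' w = 0)
    (b : Basis (α 0) K W) (b' : Basis (Σ i : Fin k, α i.succ) K W')
    (M : ∀ i, Matrix (α i) (α i) K) (hb : toMatrix b (F.restrict W) = M 0)
    (hb' : toMatrix b' (F.restrict W') = blockDiagonal' fun i : Fin k => M i.succ) :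
    toMatrix (((b.prod b').map (W.prodEquivOfIsCompl W' h)).reindex (Equiv.sumSigmaFinSucc α)) F =
      blockDiagonal' M := by
  rw [toMatrix_reindex, toMatrix_map_prodEquivOfIsCompl F h hF, hb, hb',
    blockDiagonal'_eq_reindex_fromBlocks]

theorem HasJordanKroneckerBasis.of_isCompl {A B : LinearMap.BilinForm K V} {W W' : Submodule K V}
    (h : IsCompl W W') (hA : ∀ w ∈ W, ∀ w' ∈ W', A w w' = 0 ∧ A w' w = 0)
    (hB : ∀ w ∈ W, ∀ w' ∈ W', B w w' = 0 ∧ B w' w = 0) {m : ℕ} (hm : 0 < m) {c : K}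
    (b : Basis (Fin m ⊕ Fin m) K W) (hAW : toMatrix b (A.restrict W) = jordanBlockA c m)
    (hBW : toMatrix b (B.restrict W) = jordanBlockB m)
    (h' : HasJordanKroneckerBasis K W' (A.restrict W') (B.restrict W')) :
    HasJordanKroneckerBasis K V A B := by
  obtain ⟨k, sz, hsz, eig, b', hA', hB'⟩ := h'
  let sz' : Fin (k + 1) → ℕ := Fin.cons m sz
  let eig' : Fin (k + 1) → K := Fin.cons c eig
  have hA'' := toMatrix_reindex_sumSigmaFinSucc (α := fun i => Fin (sz' i) ⊕ Fin (sz' i)) A h hA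
    b b' (fun i => jordanBlockA (eig' i) (sz' i)) hAW hA'
  have hB'' := toMatrix_reindex_sumSigmaFinSucc (α := fun i => Fin (sz' i) ⊕ Fin (sz' i)) B h hB
    b b' (fun i => jordanBlockB (sz' i)) hBW hB'
  exact ⟨k + 1, sz', Fin.cases hm hsz, eig', _, hA'', hB''⟩

theorem hasJordanKroneckerBasis_of_subsingleton [Subsingleton V] (A B : LinearMap.BilinForm K V) :
    HasJordanKroneckerBasis K V A B :=
  ⟨0, Fin.elim0, fun i => i.elim0, Fin.elim0, Basis.empty V, by ext ⟨i, _⟩; exact i.elim0,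
    by ext ⟨i, _⟩; exact i.elim0⟩

theorem exists_jordanBlock_submodule [IsAlgClosed K] [FiniteDimensional K V] [Nontrivial V]
    [NeZero (2 : K)] {A B : LinearMap.BilinForm K V} (hA : ∀ u v, A u v = -A v u)
    (hB : ∀ u v, B u v = -B v u) (hBnd : B.Nondegenerate) :
    ∃ m, 0 < m ∧ ∃ (c : K) (W : Submodule K V) (b : Basis (Fin m ⊕ Fin m) K W),
      toMatrix b (A.restrict W) = jordanBlockA c m ∧ toMatrix b (B.restrict W) = jordanBlockB m ∧
      ∀ w ∈ W, ∀ u ∈ B.orthogonal W, A w u = 0 := by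
  set R := A.symmCompOfNondegenerate B hBnd
  have hAR (u v : V) : A u v = B (R u) v := by rw [comp_symmCompOfNondegenerate_apply]
  have hR : B.IsSelfAdjoint R := fun u v => by rw [← hAR, hB u, ← hAR, hA]
  obtain ⟨m, hm, c, g, hgB, hgR, hgW⟩ := exists_jordanChain hB hBnd hR
  have hg : LinearIndependent K g := by
    refine linearIndependent_of_isUnit_gram B ?_
    convert isUnit_jordanBlockB m using 1
    ext p q
    exact hgB p q
  refine ⟨m, hm, c, _, Basis.span hg, ?_, ?_, fun w hw u hu => ?_⟩
  · ext p q
    simp [toMatrix_apply, Basis.span_apply, hAR, hgR]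
  · ext p q
    simp [toMatrix_apply, Basis.span_apply, hgB]
  · rw [hAR]
    exact hu (R w) (Submodule.span_le (p := (Submodule.span K (Set.range g)).comap R) |>.mpr
      (Set.range_subset_iff.mpr hgW) hw)

theorem hasJordanKroneckerBasis_of_nondegenerate [IsAlgClosed K] [NeZero (2 : K)]
    [FiniteDimensional K V] {A B : LinearMap.BilinForm K V} (hA : ∀ u v, A u v = -A v u)
    (hB : ∀ u v, B u v = -B v u) (hBnd : B.Nondegenerate) : HasJordanKroneckerBasis K V A B := by
  induction hn : finrank K V using Nat.strong_induction_on generalizing V with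
  | _ n ih =>
  rcases subsingleton_or_nontrivial V with hV | hV
  · exact hasJordanKroneckerBasis_of_subsingleton A B
  obtain ⟨m, hm, c, W, b, hAW, hBW, hAorth⟩ := exists_jordanBlock_submodule hA hB hBnd
  have hrefl : B.IsRefl := fun u v h => by rw [hB, h, neg_zero]
  have hWnd : (B.restrict W).Nondegenerate := by
    rw [nondegenerate_iff_det_ne_zero b, hBW]
    exact ((isUnit_iff_isUnit_det _).mp (isUnit_jordanBlockB m)).ne_zero
  have hcompl := isCompl_orthogonal_of_restrict_nondegenerate hrefl hWnd
  refine .of_isCompl hcompl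
    (fun w hw u hu => ⟨hAorth w hw u hu, by rw [hA, hAorth w hw u hu, neg_zero]⟩)
    (fun w hw u hu => ⟨hu w hw, hrefl _ _ (hu w hw)⟩) hm b hAW hBW
    (ih _ ?_ (fun u v => hA u v) (fun u v => hB u v) ?_ rfl)
  · have := finrank_orthogonal hBnd W
    rw [finrank_eq_card_basis b] at this
    simp only [Fintype.card_sum, Fintype.card_fin] at this
    have := Module.finrank_pos (R := K) (M := V)
    omega
  · refine B.nondegenerate_restrict_of_disjoint_orthogonal hrefl ?_
    rw [orthogonal_orthogonal hBnd hrefl]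
    exact hcompl.disjoint.symm

end

/-- Jordan–Kronecker theorem, nondegenerate case: for skew-symmetric
bilinear forms `A, B` on a finite-dimensional vector space over an algebraically
closed field of characteristic zero with `B` nondegenerate, there is a basis in
which the matrices of `A` and `B` are simultaneously block-diagonal, each pair of
blocks being a Jordan block pair `(jordanBlockA λᵢ mᵢ, jordanBlockB mᵢ)`. -/
theorem jordan_kronecker_nondegenerate
    {K V : Type*} [Field K] [IsAlgClosed K] [CharZero K]
    [AddCommGroup V] [Module K V] [FiniteDimensional K V]
    (A B : V →ₗ[K] V →ₗ[K] K)
    (hA : ∀ u v, A u v = - A v u) (hB : ∀ u v, B u v = - B v u)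
    (hBnd : B.Nondegenerate) :
    ∃ (k : ℕ) (sz : Fin k → ℕ) (_ : ∀ i, 0 < sz i) (eig : Fin k → K)
      (b : Module.Basis ((i : Fin k) × (Fin (sz i) ⊕ Fin (sz i))) K V),
      BilinForm.toMatrix b A
          = Matrix.blockDiagonal' (fun i => jordanBlockA (eig i) (sz i)) ∧
      BilinForm.toMatrix b B
          = Matrix.blockDiagonal' (fun i => jordanBlockB (sz i)) :=
  hasJordanKroneckerBasis_of_nondegenerate hA hB hBnd
end

section
/- Let A and B be skew-symmetric bilinear forms on a finite-dimensional vector space V over an algebraically closed field with B nondegenerate, and let P = B⁻¹A be the recursion operator (i.e., the linear operator defined by B(Pu, v) = A(u, v) for all u, v). Then the characteristic polynomial det(P − λ·Id) is the square of a polynomial in λ. -/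
/-!
Since `A` and `B` are both skew, `P` is `B`-self-adjoint. Hence generalized eigenspaces of `P` for
distinct eigenvalues are `B`-orthogonal, and as `V` is their direct sum, `B` restricts to a
nondegenerate skew form on each of them, which forces each to be even-dimensional. These dimensions
are the root multiplicities of the characteristic polynomial, so it splits into linear factors with
even exponents.
-/

open Polynomial Module

theorem Multiset.isSquare_prod_map_of_even_count {ι M : Type*} [DecidableEq ι] [CommMonoid M]
    (s : Multiset ι) (f : ι → M) (h : ∀ i, Even (s.count i)) : IsSquare (s.map f).prod := by
  rw [Finset.prod_multiset_map_count]
  exact Finset.isSquare_prod _ fun i _ => (h i).isSquare_pow (f i)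

theorem Polynomial.Monic.isSquare_of_even_rootMultiplicity {K : Type*} [Field K] [IsAlgClosed K]
    {p : K[X]} (hp : p.Monic) (h : ∀ a, Even (p.rootMultiplicity a)) : IsSquare p := by
  classical
  rw [(IsAlgClosed.splits p).eq_prod_roots_of_monic hp]
  exact Multiset.isSquare_prod_map_of_even_count _ _ fun a => count_roots p ▸ h a

namespace LinearMap

theorem even_finrank_of_separatingLeft_of_skew {K W : Type*} [Field K] [NeZero (2 : K)]
    [AddCommGroup W] [Module K W] [FiniteDimensional K W] (B : W →ₗ[K] W →ₗ[K] K)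
    (hskew : ∀ x y, B x y = - B y x) (hB : B.SeparatingLeft) : Even (finrank K W) := by
  let b := finBasis K W
  set S := toMatrix₂ b b B
  have hdet : S.det ≠ 0 := (separatingLeft_iff_det_ne_zero b).mp hB
  have hS : S.transpose = -S := by
    ext i j
    simp only [Matrix.transpose_apply, Matrix.neg_apply, S, toMatrix₂_apply]
    exact hskew (b j) (b i)
  rw [← Nat.not_odd_iff_even]
  intro hodd
  have h : S.det = -S.det := by
    simpa [Matrix.det_neg, hodd.neg_one_pow] using congrArg Matrix.det hS
  have h2 : (2 : K) * S.det = 0 := by linear_combination h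
  exact hdet ((mul_eq_zero.mp h2).resolve_left two_ne_zero)

section SelfAdjoint

variable {K V : Type*} [Field K] [AddCommGroup V] [Module K V]
  (B : V →ₗ[K] V →ₗ[K] K) {P : Module.End K V} (hP : ∀ u v, B (P u) v = B u (P v))
include hP

theorem apply_eq_zero_of_mem_maxGenEigenspace {μ ν : K} (hμν : μ ≠ ν) {u v : V}
    (hu : u ∈ P.maxGenEigenspace μ) (hv : v ∈ P.maxGenEigenspace ν) : B u v = 0 := by
  rw [Module.End.mem_maxGenEigenspace] at hu hv
  obtain ⟨m, hu⟩ := hu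
  obtain ⟨k, hv⟩ := hv
  induction m generalizing u k v with
  | zero => simp_all
  | succ m ihm =>
    induction k generalizing v with
    | zero => simp_all
    | succ k ihk =>
      rw [pow_succ, Module.End.mul_apply] at hu hv
      have h₁ : B ((P - μ • 1) u) v = 0 := ihm hu (k + 1) (by rwa [pow_succ])
      have h₂ : B u ((P - ν • 1) v) = 0 := ihk hv
      have key : (μ - ν) * B u v = 0 := by
        simp only [sub_apply, smul_apply, Module.End.one_apply, map_sub, map_smul,
          smul_eq_mul] at h₁ h₂
        linear_combination h₂ - h₁ + hP u v
      exact (mul_eq_zero.mp key).resolve_left (sub_ne_zero.mpr hμν)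

theorem separatingLeft_domRestrict₁₂_maxGenEigenspace [IsAlgClosed K]
    [FiniteDimensional K V] (hB : B.SeparatingLeft) (μ : K) :
    (B.domRestrict₁₂ (P.maxGenEigenspace μ) (P.maxGenEigenspace μ)).SeparatingLeft := by
  intro x hx
  refine Subtype.ext (hB x fun w => ?_)
  have hw : w ∈ ⨆ ν, P.maxGenEigenspace ν := by
    rw [Module.End.iSup_maxGenEigenspace_eq_top]
    trivial
  refine Submodule.iSup_induction _ (motive := fun w => B x w = 0) hw (fun ν y hy => ?_)
    (map_zero _) fun y z hy hz => by rw [map_add, hy, hz, add_zero]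
  by_cases hν : ν = μ
  · subst hν
    exact hx ⟨y, hy⟩
  · exact apply_eq_zero_of_mem_maxGenEigenspace B hP (Ne.symm hν) x.2 hy

end SelfAdjoint

end LinearMap

/-- For skew-symmetric bilinear forms `A, B` on a finite-dimensional
vector space over an algebraically closed field of characteristic zero, with `B`
nondegenerate, the characteristic polynomial `det(P - λ·Id)` of the recursion
operator `P = B⁻¹A` is the square of a polynomial. -/
theorem charpoly_recursion_operator_isSquare
    {K V : Type*} [Field K] [IsAlgClosed K] [CharZero K]
    [AddCommGroup V] [Module K V] [FiniteDimensional K V]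
    (A B : V →ₗ[K] V →ₗ[K] K)
    (hA : ∀ u v, A u v = - A v u) (hB : ∀ u v, B u v = - B v u)
    (hBnd : B.Nondegenerate)
    (P : V →ₗ[K] V) (hP : ∀ u v, B (P u) v = A u v) :
    ∃ q : Polynomial K, LinearMap.charpoly P = q ^ 2 := by
  have hSA : ∀ u v, B (P u) v = B u (P v) := fun u v => by rw [hP, hA, ← hP, hB, neg_neg]
  have hmult : ∀ μ, Even (P.charpoly.rootMultiplicity μ) := fun μ => by
    rw [← LinearMap.finrank_maxGenEigenspace_eq]
    exact LinearMap.even_finrank_of_separatingLeft_of_skew (B.domRestrict₁₂ _ _) (fun x y => hB x y)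
      (LinearMap.separatingLeft_domRestrict₁₂_maxGenEigenspace B hSA hBnd.1 μ)
  obtain ⟨q, hq⟩ := (LinearMap.charpoly_monic P).isSquare_of_even_rootMultiplicity hmult
  exact ⟨q, hq.trans (sq q).symm⟩
end

section
/- Let A and B be skew-symmetric bilinear forms on a finite-dimensional vector space V with B nondegenerate, P = B⁻¹A the recursion operator, and λ ≠ μ distinct scalars. Then the generalized eigenspaces of P for λ and μ are orthogonal with respect to both A and B: for u in the generalized λ-eigenspace and v in the generalized μ-eigenspace, A(u,v) = 0 and B(u,v) = 0. -/
open Module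

private lemma key_orth {K V : Type*} [Field K]
    [AddCommGroup V] [Module K V]
    (B : V →ₗ[K] V →ₗ[K] K) (P : Module.End K V)
    (hsym : ∀ u v, B (P u) v = B u (P v))
    (lam mu : K) (hne : lam ≠ mu) :
    ∀ n a b : ℕ, a + b ≤ n → ∀ u v : V,
      ((P - lam • (1 : Module.End K V)) ^ a) u = 0 →
      ((P - mu • (1 : Module.End K V)) ^ b) v = 0 → B u v = 0 := by
  intro n
  induction n with
  | zero =>
    intro a b hab u v hu hv
    have ha : a = 0 := by omega
    subst ha
    simp only [pow_zero, Module.End.one_apply] at hu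
    subst hu; simp
  | succ n ih =>
    intro a b hab u v hu hv
    match a, b with
    | 0, b =>
      simp only [pow_zero, Module.End.one_apply] at hu
      subst hu; simp
    | a + 1, 0 =>
      simp only [pow_zero, Module.End.one_apply] at hv
      subst hv; simp
    | a + 1, b + 1 =>
      have h1 : B ((P - lam • (1 : Module.End K V)) u) v = 0 := by
        apply ih a (b + 1) (by omega)
        · rw [← Module.End.mul_apply, ← pow_succ]; exact hu
        · exact hv
      have h2 : B u ((P - mu • (1 : Module.End K V)) v) = 0 := by
        apply ih (a + 1) b (by omega)
        · exact hu
        · rw [← Module.End.mul_apply, ← pow_succ]; exact hv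
      have e1 : B ((P - lam • (1 : Module.End K V)) u) v = B (P u) v - lam * B u v := by
        simp [LinearMap.sub_apply, LinearMap.smul_apply, smul_eq_mul]
      have e2 : B u ((P - mu • (1 : Module.End K V)) v) = B u (P v) - mu * B u v := by
        simp [LinearMap.sub_apply, LinearMap.smul_apply, smul_eq_mul]
      have hkey : (mu - lam) * B u v = 0 := by
        have hs := hsym u v
        rw [e1] at h1; rw [e2] at h2
        linear_combination h1 - h2 - hs
      rcases mul_eq_zero.mp hkey with h | h
      · exact absurd (sub_eq_zero.mp h) (Ne.symm hne)
      · exact h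

/-- Generalized eigenspaces of the recursion operator `P = B⁻¹A` for
distinct eigenvalues `λ ≠ μ` are orthogonal with respect to both `A` and `B`. The
generalized eigenspace for `λ` is `Ker (P - λ·Id)^(dim V)`. -/
theorem genEigenspaces_biorthogonal
    {K V : Type*} [Field K] [IsAlgClosed K] [CharZero K]
    [AddCommGroup V] [Module K V] [FiniteDimensional K V]
    (A B : V →ₗ[K] V →ₗ[K] K)
    (hA : ∀ u v, A u v = - A v u) (hB : ∀ u v, B u v = - B v u)
    (hBnd : B.Nondegenerate)
    (P : V →ₗ[K] V) (hP : ∀ u v, B (P u) v = A u v)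
    (lam mu : K) (hne : lam ≠ mu)
    (u v : V)
    (hu : u ∈ LinearMap.ker ((P - lam • LinearMap.id) ^ (finrank K V)))
    (hv : v ∈ LinearMap.ker ((P - mu • LinearMap.id) ^ (finrank K V))) :
    A u v = 0 ∧ B u v = 0 := by
  have hsym : ∀ u v, B (P u) v = B u (P v) := by
    intro x y
    rw [hP, hA, ← hP, hB (P y) x]
    ring
  rw [LinearMap.mem_ker] at hu hv
  have hu' : ((P - lam • (1 : Module.End K V)) ^ (finrank K V)) u = 0 := hu
  have hv' : ((P - mu • (1 : Module.End K V)) ^ (finrank K V)) v = 0 := hv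
  have hBuv : B u v = 0 :=
    key_orth B P hsym lam mu hne (2 * finrank K V) (finrank K V) (finrank K V)
      (by omega) u v hu' hv'
  set Q : Module.End K V := P - lam • (1 : Module.End K V) with hQ
  have hcomm : Commute (P : Module.End K V) Q :=
    Commute.sub_right (Commute.refl _) (Commute.smul_right (Commute.one_right _) lam)
  have hPu : (Q ^ (finrank K V)) (P u) = 0 := by
    have hc := (hcomm.pow_right (finrank K V)).symm
    calc (Q ^ (finrank K V)) (P u)
        = ((Q ^ (finrank K V)) * P) u := rfl
      _ = (P * (Q ^ (finrank K V))) u := by rw [hc]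
      _ = P ((Q ^ (finrank K V)) u) := rfl
      _ = 0 := by rw [show (Q ^ (finrank K V)) u = 0 from hu']; simp
  have hAuv : A u v = 0 := by
    rw [← hP]
    exact key_orth B P hsym lam mu hne (2 * finrank K V) (finrank K V) (finrank K V)
      (by omega) (P u) v hPu hv'
  exact ⟨hAuv, hBuv⟩
end

section
/- Let {A_λ = A + λB} be a Poisson pencil on a manifold M with constant rank, and let λ(x) be a smooth isolated (finite) eigenvalue on M. Then for every x ∈ M, the differential dλ(x) lies in the kernel of the bivector A − λ(x)B, i.e., (A − λ(x)B)(dλ(x), ·) = 0. -/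
open Matrix

/-- A (smooth) bivector field on `ℝⁿ`, written in coordinates as a matrix-valued
map, is Poisson if it satisfies the Jacobi identity
`Σ_l (P_{il} ∂_l P_{jk} + P_{jl} ∂_l P_{ki} + P_{kl} ∂_l P_{ij}) = 0`. -/
def IsPoissonBivector (n : ℕ) (P : (Fin n → ℝ) → Matrix (Fin n) (Fin n) ℝ) : Prop :=
  ∀ (x : Fin n → ℝ) (i j k : Fin n),
    ∑ l : Fin n,
      (P x i l * fderiv ℝ (fun y => P y j k) x (Pi.single l 1) +
       P x j l * fderiv ℝ (fun y => P y k i) x (Pi.single l 1) +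
       P x k l * fderiv ℝ (fun y => P y i j) x (Pi.single l 1)) = 0

open Set Finset

namespace DlamAux

variable {n : ℕ}

lemma clm_apply_eq_sum (φ : (Fin n → ℝ) →L[ℝ] ℝ) (v : Fin n → ℝ) :
    φ v = ∑ l, v l * φ (Pi.single l 1) := by
  have hv : v = ∑ l, v l • (Pi.single l 1 : Fin n → ℝ) := by
    funext j
    simp [Finset.sum_apply, Pi.single_apply, mul_ite]
  conv_lhs => rw [hv]
  rw [map_sum]
  simp [smul_eq_mul]

lemma entry2 (X Y : Matrix (Fin n) (Fin n) ℝ) (a b : Fin n) :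
    ∑ l, X a l * Y l b = (X * Y) a b := (Matrix.mul_apply).symm

lemma entry3 (X M Z : Matrix (Fin n) (Fin n) ℝ) (a b : Fin n) :
    ∑ j, ∑ k, X a j * M j k * Z b k = (X * M * Zᵀ) a b := by
  simp only [Matrix.mul_apply, Matrix.transpose_apply, Finset.sum_mul]
  rw [Finset.sum_comm]

lemma mat_id1 (H G W : Matrix (Fin n) (Fin n) ℝ) : (-(H*W))*G + H*(W*G) = 0 := by
  noncomm_ring

lemma mat_id2 (H M W : Matrix (Fin n) (Fin n) ℝ) (hM : Mᵀ = -M) :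
    (-(H*W))*M*Hᵀ + H*(M*Wᵀ - W*Mᵀ)*Hᵀ + H*M*(-(H*W))ᵀ = 0 := by
  rw [Matrix.transpose_neg, Matrix.transpose_mul, hM]
  noncomm_ring

/-- The transport matrix `W`. -/
noncomputable def Wm (P : (Fin n → ℝ) → Matrix (Fin n) (Fin n) ℝ) (j₀ : Fin n) :
    (Fin n → ℝ) → Fin n → Fin n → ℝ :=
  fun y a b => fderiv ℝ (fun z => P z a j₀) y (Pi.single b 1)

theorem flow_rank
    (P : (Fin n → ℝ) → Matrix (Fin n) (Fin n) ℝ)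
    (hPsm : ∀ i j, ContDiff ℝ (⊤ : ℕ∞) (fun x => P x i j))
    (hPsk : ∀ x i j, P x j i = - P x i j)
    (hJac : ∀ (x : Fin n → ℝ) (i j k : Fin n), ∑ l : Fin n,
      (P x i l * fderiv ℝ (fun y => P y j k) x (Pi.single l 1) +
       P x j l * fderiv ℝ (fun y => P y k i) x (Pi.single l 1) +
       P x k l * fderiv ℝ (fun y => P y i j) x (Pi.single l 1)) = 0)
    (x₀ : Fin n → ℝ) (j₀ : Fin n) :
    ∃ (γ : ℝ → (Fin n → ℝ)) (ε : ℝ), 0 < ε ∧ γ 0 = x₀ ∧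
      (∀ t ∈ Ioo (-ε) ε, HasDerivAt γ (fun l => P (γ t) l j₀) t) ∧
      (∀ t ∈ Ico 0 ε, (P (γ t)).rank ≤ (P x₀).rank) := by
  classical
  have hWsm : ∀ a b, ContDiff ℝ (⊤ : ℕ∞) (fun y => Wm P j₀ y a b) := by
    intro a b
    exact ((hPsm a j₀).fderiv_right (by simp)).clm_apply contDiff_const
  set vf : ((Fin n → ℝ) × ((Fin n → Fin n → ℝ) × (Fin n → Fin n → ℝ))) →
      ((Fin n → ℝ) × ((Fin n → Fin n → ℝ) × (Fin n → Fin n → ℝ))) := fun s =>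
    (fun l => P s.1 l j₀,
     fun a b => ∑ l, Wm P j₀ s.1 a l * s.2.1 l b,
     fun a b => -∑ l, s.2.2 a l * Wm P j₀ s.1 l b) with hvf
  have hvsm : ContDiff ℝ (⊤ : ℕ∞) vf := by
    apply ContDiff.prodMk
    · exact contDiff_pi.2 fun l => (hPsm l j₀).comp contDiff_fst
    apply ContDiff.prodMk
    · refine contDiff_pi.2 fun a => contDiff_pi.2 fun b => ContDiff.sum fun l _ => ?_
      exact ((hWsm a l).comp contDiff_fst).mul
        (contDiff_pi.1 (contDiff_pi.1 contDiff_snd.fst l) b)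
    · refine contDiff_pi.2 fun a => contDiff_pi.2 fun b => ContDiff.neg <|
        ContDiff.sum fun l _ => ?_
      exact (contDiff_pi.1 (contDiff_pi.1 contDiff_snd.snd a) l).mul
        ((hWsm l b).comp contDiff_fst)
  obtain ⟨f, hf0, ε, hε, hf⟩ :=
    ContDiffAt.exists_forall_mem_closedBall_exists_eq_forall_mem_Ioo_hasDerivAt₀
      (hvsm.of_le (by simp)).contDiffAt 0
      (x₀ := (x₀, fun a b => (1 : Matrix (Fin n) (Fin n) ℝ) a b,
                  fun a b => (1 : Matrix (Fin n) (Fin n) ℝ) a b))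
  simp only [zero_sub, zero_add] at hf
  set γ : ℝ → (Fin n → ℝ) := fun t => (f t).1 with hγdef
  set Gf : ℝ → Fin n → Fin n → ℝ := fun t => (f t).2.1 with hGdef
  set Hf : ℝ → Fin n → Fin n → ℝ := fun t => (f t).2.2 with hHdef
  have hγ0 : γ 0 = x₀ := by change (f 0).1 = _; rw [hf0]
  have hG0 : Gf 0 = fun a b => (1 : Matrix (Fin n) (Fin n) ℝ) a b := by
    change (f 0).2.1 = _; rw [hf0]
  have hH0 : Hf 0 = fun a b => (1 : Matrix (Fin n) (Fin n) ℝ) a b := by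
    change (f 0).2.2 = _; rw [hf0]
  -- component derivatives
  have hγ' : ∀ t ∈ Ioo (-ε) ε, HasDerivAt γ (fun l => P (γ t) l j₀) t := by
    intro t ht
    exact (ContinuousLinearMap.fst ℝ _ _).hasFDerivAt.comp_hasDerivAt t (hf t ht)
  have hG' : ∀ t ∈ Ioo (-ε) ε, ∀ a b, HasDerivAt (fun τ => Gf τ a b)
      (∑ l, Wm P j₀ (γ t) a l * Gf t l b) t := by
    intro t ht a b
    have h2 := (ContinuousLinearMap.snd ℝ _ _).hasFDerivAt.comp_hasDerivAt t (hf t ht)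
    have h21 := (ContinuousLinearMap.fst ℝ _ _).hasFDerivAt.comp_hasDerivAt t h2
    exact hasDerivAt_pi.1 ((hasDerivAt_pi.1 h21) a) b
  have hH' : ∀ t ∈ Ioo (-ε) ε, ∀ a b, HasDerivAt (fun τ => Hf τ a b)
      (-∑ l, Hf t a l * Wm P j₀ (γ t) l b) t := by
    intro t ht a b
    have h2 := (ContinuousLinearMap.snd ℝ _ _).hasFDerivAt.comp_hasDerivAt t (hf t ht)
    have h22 := (ContinuousLinearMap.snd ℝ _ _).hasFDerivAt.comp_hasDerivAt t h2
    exact hasDerivAt_pi.1 ((hasDerivAt_pi.1 h22) a) b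

  -- skew-symmetry facts
  have hfneg : ∀ (a b : Fin n) (y : Fin n → ℝ),
      fderiv ℝ (fun z => P z a b) y = -fderiv ℝ (fun z => P z b a) y := by
    intro a b y
    have he : (fun z => P z a b) = (fun z => -P z b a) := funext fun z => hPsk z b a
    rw [he, fderiv_fun_neg]
  have hskT : ∀ y : Fin n → ℝ, (P y)ᵀ = -(P y) := by
    intro y
    ext i j
    simp only [Matrix.transpose_apply, Matrix.neg_apply]
    exact hPsk y i j
  -- Jacobi identity rearranged
  have hkey : ∀ (y : Fin n → ℝ) (j k : Fin n),
      (∑ l, P y l j₀ * fderiv ℝ (fun z => P z j k) y (Pi.single l 1)) =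
      ∑ l, (P y j l * Wm P j₀ y k l - P y k l * Wm P j₀ y j l) := by
    intro y j k
    have hJ := hJac y j₀ j k
    have hterm : ∀ l : Fin n,
        P y j₀ l * fderiv ℝ (fun z => P z j k) y (Pi.single l 1) +
        P y j l * fderiv ℝ (fun z => P z k j₀) y (Pi.single l 1) +
        P y k l * fderiv ℝ (fun z => P z j₀ j) y (Pi.single l 1)
        = (P y j l * Wm P j₀ y k l - P y k l * Wm P j₀ y j l)
          - P y l j₀ * fderiv ℝ (fun z => P z j k) y (Pi.single l 1) := by
      intro l
      have h1 : P y j₀ l = -P y l j₀ := hPsk y l j₀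
      have h2 : fderiv ℝ (fun z => P z j₀ j) y (Pi.single l 1) = -(Wm P j₀ y j l) := by
        rw [hfneg j₀ j y]
        simp [Wm]
      have h3 : fderiv ℝ (fun z => P z k j₀) y (Pi.single l 1) = Wm P j₀ y k l := rfl
      rw [h1, h2, h3]
      ring
    rw [Finset.sum_congr rfl (fun l _ => hterm l), Finset.sum_sub_distrib] at hJ
    linarith [hJ]
  -- derivative of the P-entries along the flow
  have hM' : ∀ t ∈ Ioo (-ε) ε, ∀ j k, HasDerivAt (fun τ => P (γ τ) j k)
      (∑ l, (P (γ t) j l * Wm P j₀ (γ t) k l - P (γ t) k l * Wm P j₀ (γ t) j l)) t := by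
    intro t ht j k
    have hD := ((hPsm j k).differentiable (by simp) (γ t)).hasFDerivAt.comp_hasDerivAt t (hγ' t ht)
    have e2 : fderiv ℝ (fun z => P z j k) (γ t) (fun l => P (γ t) l j₀)
        = ∑ l, (P (γ t) j l * Wm P j₀ (γ t) k l - P (γ t) k l * Wm P j₀ (γ t) j l) := by
      rw [clm_apply_eq_sum]
      exact hkey (γ t) j k
    exact e2 ▸ hD
  refine ⟨γ, ε, hε, hγ0, hγ', ?_⟩
  intro t' ht'
  have hsub : Icc 0 t' ⊆ Ioo (-ε) ε := fun τ hτ =>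
    ⟨lt_of_lt_of_le (neg_lt_zero.2 hε) hτ.1, lt_of_le_of_lt hτ.2 ht'.2⟩
  have const_of : ∀ F : ℝ → ℝ, (∀ τ ∈ Icc 0 t', HasDerivAt F 0 τ) → F t' = F 0 := by
    intro F hF
    exact constant_of_has_deriv_right_zero
      (fun τ hτ => (hF τ hτ).continuousAt.continuousWithinAt)
      (fun τ hτ => (hF τ (Ico_subset_Icc_self hτ)).hasDerivWithinAt)
      t' (right_mem_Icc.2 ht'.1)
  -- H * G = 1 along the flow
  have hHGm : Matrix.of (Hf t') * Matrix.of (Gf t') = 1 := by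
    apply Matrix.ext
    intro a b
    have hc : (fun τ => ∑ l, Hf τ a l * Gf τ l b) t'
        = (fun τ => ∑ l, Hf τ a l * Gf τ l b) 0 := by
      apply const_of
      intro τ hτ
      have hτ' := hsub hτ
      have hd : HasDerivAt (fun τ => ∑ l, Hf τ a l * Gf τ l b)
          (∑ l, ((-∑ c, Hf τ a c * Wm P j₀ (γ τ) c l) * Gf τ l b
            + Hf τ a l * (∑ c, Wm P j₀ (γ τ) l c * Gf τ c b))) τ :=
        HasDerivAt.fun_sum fun l _ => ((hH' τ hτ' a l).mul (hG' τ hτ' l b))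
      have hz : (∑ l, ((-∑ c, Hf τ a c * Wm P j₀ (γ τ) c l) * Gf τ l b
            + Hf τ a l * (∑ c, Wm P j₀ (γ τ) l c * Gf τ c b))) = 0 := by
        have e : ∀ l : Fin n, ((-∑ c, Hf τ a c * Wm P j₀ (γ τ) c l) * Gf τ l b
            + Hf τ a l * (∑ c, Wm P j₀ (γ τ) l c * Gf τ c b))
            = (-(Matrix.of (Hf τ) * Matrix.of (Wm P j₀ (γ τ)))) a l * Matrix.of (Gf τ) l b
              + Matrix.of (Hf τ) a l
                * ((Matrix.of (Wm P j₀ (γ τ)) * Matrix.of (Gf τ)) l b) := by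
          intro l
          simp [Matrix.mul_apply, Matrix.neg_apply]
        rw [Finset.sum_congr rfl fun l _ => e l, Finset.sum_add_distrib,
          entry2, entry2, ← Matrix.add_apply, mat_id1]
        simp
      exact hz ▸ hd
    have hc' : ∑ l, Hf t' a l * Gf t' l b = ∑ l, Hf 0 a l * Gf 0 l b := hc
    rw [Matrix.mul_apply]
    show (∑ l, Hf t' a l * Gf t' l b) = _
    rw [hc', hH0, hG0]
    simp [Matrix.one_apply]
  -- H * M * Hᵀ is constant along the flow
  have hHMHm : Matrix.of (Hf t') * P (γ t') * (Matrix.of (Hf t'))ᵀ = P x₀ := by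
    apply Matrix.ext
    intro a b
    have hc : (fun τ => ∑ j, ∑ k, Hf τ a j * P (γ τ) j k * Hf τ b k) t'
        = (fun τ => ∑ j, ∑ k, Hf τ a j * P (γ τ) j k * Hf τ b k) 0 := by
      apply const_of
      intro τ hτ
      have hτ' := hsub hτ
      have hd : HasDerivAt (fun τ => ∑ j, ∑ k, Hf τ a j * P (γ τ) j k * Hf τ b k)
          (∑ j, ∑ k, (((-∑ c, Hf τ a c * Wm P j₀ (γ τ) c j) * P (γ τ) j k
              + Hf τ a j * (∑ l, (P (γ τ) j l * Wm P j₀ (γ τ) k l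
                  - P (γ τ) k l * Wm P j₀ (γ τ) j l))) * Hf τ b k
            + Hf τ a j * P (γ τ) j k * (-∑ c, Hf τ b c * Wm P j₀ (γ τ) c k))) τ :=
        HasDerivAt.fun_sum fun j _ => HasDerivAt.fun_sum fun k _ =>
          (((hH' τ hτ' a j).mul (hM' τ hτ' j k)).mul (hH' τ hτ' b k))
      have hz : (∑ j, ∑ k, (((-∑ c, Hf τ a c * Wm P j₀ (γ τ) c j) * P (γ τ) j k
              + Hf τ a j * (∑ l, (P (γ τ) j l * Wm P j₀ (γ τ) k l
                  - P (γ τ) k l * Wm P j₀ (γ τ) j l))) * Hf τ b k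
            + Hf τ a j * P (γ τ) j k * (-∑ c, Hf τ b c * Wm P j₀ (γ τ) c k))) = 0 := by
        have e : ∀ j k : Fin n, (((-∑ c, Hf τ a c * Wm P j₀ (γ τ) c j) * P (γ τ) j k
              + Hf τ a j * (∑ l, (P (γ τ) j l * Wm P j₀ (γ τ) k l
                  - P (γ τ) k l * Wm P j₀ (γ τ) j l))) * Hf τ b k
            + Hf τ a j * P (γ τ) j k * (-∑ c, Hf τ b c * Wm P j₀ (γ τ) c k))
            = (-(Matrix.of (Hf τ) * Matrix.of (Wm P j₀ (γ τ)))) a j * P (γ τ) j k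
                * Matrix.of (Hf τ) b k
              + Matrix.of (Hf τ) a j
                * ((P (γ τ) * (Matrix.of (Wm P j₀ (γ τ)))ᵀ
                    - Matrix.of (Wm P j₀ (γ τ)) * (P (γ τ))ᵀ) j k) * Matrix.of (Hf τ) b k
              + Matrix.of (Hf τ) a j * P (γ τ) j k
                * ((-(Matrix.of (Hf τ) * Matrix.of (Wm P j₀ (γ τ)))) b k) := by
          intro j k
          have e1 : ∀ u v : Fin n, (-(Matrix.of (Hf τ) * Matrix.of (Wm P j₀ (γ τ)))) u v
              = -∑ c, Hf τ u c * Wm P j₀ (γ τ) c v := by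
            intro u v
            simp [Matrix.mul_apply, Matrix.neg_apply]
          have e2 : (P (γ τ) * (Matrix.of (Wm P j₀ (γ τ)))ᵀ
                - Matrix.of (Wm P j₀ (γ τ)) * (P (γ τ))ᵀ) j k
              = ∑ l, (P (γ τ) j l * Wm P j₀ (γ τ) k l - P (γ τ) k l * Wm P j₀ (γ τ) j l) := by
            simp only [Matrix.sub_apply, Matrix.mul_apply, Matrix.transpose_apply,
              Finset.sum_sub_distrib, Matrix.of_apply]
            congr 1
            exact Finset.sum_congr rfl fun l _ => by ring
          rw [e1, e1, e2]
          simp only [Matrix.of_apply]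
          ring
        rw [Finset.sum_congr rfl fun j _ => Finset.sum_congr rfl fun k _ => e j k]
        have split : ∀ (F G H : Fin n → Fin n → ℝ),
            (∑ j, ∑ k, (F j k + G j k + H j k))
            = (∑ j, ∑ k, F j k) + (∑ j, ∑ k, G j k) + (∑ j, ∑ k, H j k) := by
          intro F G H
          rw [← Finset.sum_add_distrib, ← Finset.sum_add_distrib]
          exact Finset.sum_congr rfl fun j _ => by
            rw [← Finset.sum_add_distrib, ← Finset.sum_add_distrib]
        rw [split, entry3, entry3, entry3, ← Matrix.add_apply, ← Matrix.add_apply,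
          mat_id2 _ _ _ (hskT (γ τ))]
        simp
      exact hz ▸ hd
    have hc' : (∑ j, ∑ k, Hf t' a j * P (γ t') j k * Hf t' b k)
        = ∑ j, ∑ k, Hf 0 a j * P (γ 0) j k * Hf 0 b k := hc
    rw [← entry3 (Matrix.of (Hf t')) (P (γ t')) (Matrix.of (Hf t'))]
    show (∑ j, ∑ k, Hf t' a j * P (γ t') j k * Hf t' b k) = _
    rw [hc', hH0, hγ0]
    simp [Matrix.one_apply]
  -- conclude: rank is preserved
  have hGH : Matrix.of (Gf t') * Matrix.of (Hf t') = 1 := mul_eq_one_comm.mp hHGm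
  have hMfact : P (γ t') = Matrix.of (Gf t') * P x₀ * (Matrix.of (Gf t'))ᵀ := by
    rw [← hHMHm]
    have e : Matrix.of (Gf t') * (Matrix.of (Hf t') * P (γ t') * (Matrix.of (Hf t'))ᵀ)
          * (Matrix.of (Gf t'))ᵀ
        = (Matrix.of (Gf t') * Matrix.of (Hf t')) * P (γ t')
          * ((Matrix.of (Gf t') * Matrix.of (Hf t'))ᵀ) := by
      rw [Matrix.transpose_mul]
      noncomm_ring
    rw [e, hGH]
    simp
  rw [hMfact]
  exact le_trans (Matrix.rank_mul_le_left _ _) (Matrix.rank_mul_le_right _ _)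

end DlamAux

open DlamAux

/-- Let `{A_λ = A + λB}` be a Poisson pencil on `M = ℝⁿ` of constant
rank `R` (the maximum of `rk (A + λB)(x)` over `λ ∈ ℝ̄`), and let `λ(x)` be a
smooth isolated finite eigenvalue (i.e. `rk (A − λ(x)B)(x) < R`, with no other
eigenvalues in a neighborhood of the graph `{(x, λ(x))}` in `M × ℝ`). Then at
every point the differential `dλ(x)` lies in the kernel of the bivector
`A − λ(x)B`: `(A − λ(x)B)(dλ(x), ·) = 0`. -/
theorem dlam_in_ker_of_isolated_eigenvalue
    (n : ℕ) (A B : (Fin n → ℝ) → Matrix (Fin n) (Fin n) ℝ)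
    -- smoothness of the bivectors
    (hAsm : ∀ i j, ContDiff ℝ (⊤ : ℕ∞) (fun x => A x i j))
    (hBsm : ∀ i j, ContDiff ℝ (⊤ : ℕ∞) (fun x => B x i j))
    -- skew-symmetry
    (hAsk : ∀ x, (A x)ᵀ = -(A x)) (hBsk : ∀ x, (B x)ᵀ = -(B x))
    -- every member of the pencil (including `B = A_∞`) is a Poisson bivector
    (hpencil : ∀ lam : ℝ, IsPoissonBivector n (fun x => A x + lam • B x))
    (hB : IsPoissonBivector n B)
    -- the rank of the pencil is constant, equal to `R`
    (R : ℕ)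
    (hRle : ∀ (x : Fin n → ℝ) (lam : ℝ), (A x + lam • B x).rank ≤ R)
    (hRBle : ∀ x, (B x).rank ≤ R)
    (hRattain : ∀ x : Fin n → ℝ, (∃ lam : ℝ, (A x + lam • B x).rank = R) ∨
      (B x).rank = R)
    -- `lam` is a smooth finite eigenvalue
    (lam : (Fin n → ℝ) → ℝ) (hlamsm : ContDiff ℝ (⊤ : ℕ∞) lam)
    (heig : ∀ x, (A x - lam x • B x).rank < R)
    -- `lam` is isolated: a neighborhood of its graph contains no other eigenvalue
    (hiso : ∃ U : Set ((Fin n → ℝ) × ℝ), IsOpen U ∧ (∀ x, (x, lam x) ∈ U) ∧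
      ∀ p ∈ U, (A p.1 - p.2 • B p.1).rank < R → p.2 = lam p.1) :
    ∀ x : Fin n → ℝ,
      (A x - lam x • B x) *ᵥ (fun l => fderiv ℝ lam x (Pi.single l 1)) = 0 := by
  classical
  intro x₀
  obtain ⟨U, hUopen, hUmem, hUiso⟩ := hiso
  set lam0 := lam x₀ with hlam0
  set P : (Fin n → ℝ) → Matrix (Fin n) (Fin n) ℝ := fun y => A y + (-lam0) • B y with hP
  have hPeq : ∀ y, P y = A y - lam0 • B y := by
    intro y
    rw [hP]
    simp [sub_eq_add_neg, neg_smul]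
  have hPsm : ∀ i j, ContDiff ℝ (⊤ : ℕ∞) (fun y => P y i j) := by
    intro i j
    have he : (fun y => P y i j) = fun y => A y i j + (-lam0) * B y i j := by
      funext y
      simp [hP, Matrix.add_apply, Matrix.smul_apply, smul_eq_mul]
    rw [he]
    exact (hAsm i j).add (contDiff_const.mul (hBsm i j))
  have hPsk : ∀ y i j, P y j i = -P y i j := by
    intro y i j
    have hA := congrFun (congrFun (hAsk y) i) j
    have hB' := congrFun (congrFun (hBsk y) i) j
    simp only [Matrix.transpose_apply, Matrix.neg_apply] at hA hB'
    simp [hP, Matrix.add_apply, Matrix.smul_apply, smul_eq_mul, hA, hB']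
    ring
  have hJac : ∀ (x : Fin n → ℝ) (i j k : Fin n), ∑ l : Fin n,
      (P x i l * fderiv ℝ (fun y => P y j k) x (Pi.single l 1) +
       P x j l * fderiv ℝ (fun y => P y k i) x (Pi.single l 1) +
       P x k l * fderiv ℝ (fun y => P y i j) x (Pi.single l 1)) = 0 := hpencil (-lam0)
  -- the key directional derivative claim
  have main : ∀ j₀ : Fin n, ∑ l, P x₀ l j₀ * fderiv ℝ lam x₀ (Pi.single l 1) = 0 := by
    intro j₀
    obtain ⟨γ, ε, hε, hγ0, hγ', hrank⟩ := flow_rank P hPsm hPsk hJac x₀ j₀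
    have h0mem : (0:ℝ) ∈ Ioo (-ε) ε := ⟨neg_lt_zero.2 hε, hε⟩
    have hγcont : ContinuousAt γ 0 := (hγ' 0 h0mem).continuousAt
    have hU0 : ((γ 0, lam0) : (Fin n → ℝ) × ℝ) ∈ U := by rw [hγ0]; exact hUmem x₀
    have hev : ∀ᶠ t in nhds (0:ℝ), (γ t, lam0) ∈ U :=
      ((hγcont.prodMk continuousAt_const)).eventually (hUopen.eventually_mem hU0)
    obtain ⟨η, hη, hball⟩ := Metric.eventually_nhds_iff.mp hev
    set η' := min η ε with hη'
    have hη'pos : 0 < η' := lt_min hη hε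
    have hconst : ∀ t ∈ Ico (0:ℝ) η', lam (γ t) = lam0 := by
      intro t ht
      have h1 : (γ t, lam0) ∈ U := by
        apply hball
        rw [Real.dist_eq, sub_zero, abs_of_nonneg ht.1]
        exact lt_of_lt_of_le ht.2 (min_le_left _ _)
      have h2 : (A (γ t) - lam0 • B (γ t)).rank < R := by
        rw [← hPeq]
        calc (P (γ t)).rank ≤ (P x₀).rank :=
              hrank t ⟨ht.1, lt_of_lt_of_le ht.2 (min_le_right _ _)⟩
          _ < R := by rw [hPeq]; exact heig x₀
      exact (hUiso (γ t, lam0) h1 h2).symm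
    have hld : HasDerivAt (fun t => lam (γ t)) (fderiv ℝ lam x₀ (fun l => P x₀ l j₀)) 0 := by
      have hcomp := ((hlamsm.differentiable (by simp) (γ 0)).hasFDerivAt).comp_hasDerivAt 0
        (hγ' 0 h0mem)
      rwa [hγ0] at hcomp
    have hzero : fderiv ℝ lam x₀ (fun l => P x₀ l j₀) = 0 := by
      have hud : UniqueDiffWithinAt ℝ (Ici (0:ℝ)) 0 := uniqueDiffOn_Ici 0 0 self_mem_Ici
      have h1 := hld.hasDerivWithinAt.derivWithin hud
      have hc' : HasDerivWithinAt (fun t => lam (γ t)) 0 (Ici (0:ℝ)) 0 := by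
        have hmem : Ico (0:ℝ) η' ∈ nhdsWithin (0:ℝ) (Ici 0) :=
          Ico_mem_nhdsGE hη'pos
        have heq : (fun t => lam (γ t)) =ᶠ[nhdsWithin (0:ℝ) (Ici 0)] (fun _ => lam0) := by
          filter_upwards [hmem] with t ht
          exact hconst t ht
        have h0 : lam (γ 0) = lam0 := by rw [hγ0]
        exact (hasDerivWithinAt_const 0 (Ici (0:ℝ)) lam0).congr_of_eventuallyEq heq h0
      have h2 := hc'.derivWithin hud
      rw [h1] at h2
      exact h2
    have := clm_apply_eq_sum (fderiv ℝ lam x₀) (fun l => P x₀ l j₀)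
    rw [hzero] at this
    exact this.symm
  -- conclude using skew-symmetry
  funext i
  have hi := main i
  have : ((A x₀ - lam0 • B x₀) *ᵥ (fun l => fderiv ℝ lam x₀ (Pi.single l 1))) i
      = ∑ l, P x₀ i l * fderiv ℝ lam x₀ (Pi.single l 1) := by
    simp [Matrix.mulVec, dotProduct, hPeq]
  rw [this]
  have : ∑ l, P x₀ i l * fderiv ℝ lam x₀ (Pi.single l 1)
      = -∑ l, P x₀ l i * fderiv ℝ lam x₀ (Pi.single l 1) := by
    rw [← Finset.sum_neg_distrib]
    exact Finset.sum_congr rfl fun l _ => by rw [hPsk x₀ l i]; ring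
  rw [this, hi]
  simp
end
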